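/- (Structure Theorem for PAN) Let m be a deficient natural number, e ≥ 1 a natural number, and p a prime with gcd(m, p) = 1. Then m·p^e is primitive abundant if and only if all of the following hold (as inequalities of rationals): (1) p^e/σ(p^{e−1}) < c(m); (2) p^e/σ(p^{e−1}) > σ(m) / (d(m) + 2m/(σ(q^α) − 1)) for every prime power q^α exactly dividing m (with α ≥ 1); and (3) either e = 1 or p^{e−1}/σ(p^{e−2}) > c(m). -/

import Mathlib

/-!
Write `n = m·p^e`. Since `σ` is multiplicative, `n` is abundant iff (1) holds. Deficiency passes
to divisors (the abundancy index `σ(d)/d` is monotone under divisibility), so `n` is primitive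
abundant iff it is abundant and `n/q` is deficient for every prime `q ∣ n`. If `q^α ∣∣ n` then
`σ(n/q) = σ(n)·σ(q^(α-1))/σ(q^α)` and `q·σ(q^(α-1)) = σ(q^α) - 1`, so `n/q` is deficient iff
`(σ(q^α) - 1)·σ(n) < 2n·σ(q^α)`; for `q ∣ m` this rearranges to (2). For `q = p`,
`n/p = m·p^(e-1)`, whose deficiency is (3).
-/

/-- The sum of all divisors of `n`. -/
def sigma1 (n : ℕ) : ℕ := ∑ d ∈ n.divisors, d

/-- `n` is abundant if `σ(n) > 2n`. -/
def Abundant (n : ℕ) : Prop := 2 * n < sigma1 n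

/-- `n` is deficient if `σ(n) < 2n`. -/
def Deficient (n : ℕ) : Prop := sigma1 n < 2 * n

/-- A primitive abundant number: abundant and all proper divisors deficient. -/
def PrimitiveAbundant (n : ℕ) : Prop :=
  Abundant n ∧ ∀ d ∈ n.properDivisors, Deficient d

/-- The center of a deficient number `m`: `c(m) = σ(m)/d(m)` where `d(m) = 2m - σ(m)`. -/
def center (n : ℕ) : ℚ := (sigma1 n : ℚ) / (2 * (n : ℚ) - (sigma1 n : ℚ))

open ArithmeticFunction
open scoped ArithmeticFunction.sigma

lemma sigma1_eq_sigma_one (n : ℕ) : sigma1 n = σ 1 n := (sigma_one_apply n).symm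

lemma sigma1_mul {a b : ℕ} (h : a.Coprime b) : sigma1 (a * b) = sigma1 a * sigma1 b := by
  simp only [sigma1_eq_sigma_one]
  exact isMultiplicative_sigma.map_mul_of_coprime h

lemma sigma1_pos {n : ℕ} (hn : n ≠ 0) : 0 < sigma1 n :=
  sigma1_eq_sigma_one n ▸ sigma_pos 1 n hn

lemma sigma1_prime_pow_succ {p : ℕ} (hp : p.Prime) (k : ℕ) :
    sigma1 (p ^ (k + 1)) = sigma1 (p ^ k) + p ^ (k + 1) := by
  simp only [sigma1_eq_sigma_one, sigma_one_apply_prime_pow hp, Finset.sum_range_succ _ (k + 1)]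

lemma sigma1_prime_pow_succ_eq_mul_add_one {p : ℕ} (hp : p.Prime) (k : ℕ) :
    sigma1 (p ^ (k + 1)) = p * sigma1 (p ^ k) + 1 := by
  rw [sigma1_eq_sigma_one, sigma1_eq_sigma_one, sigma_one_apply_prime_pow hp,
    sigma_one_apply_prime_pow hp, Finset.sum_range_succ', Finset.mul_sum]
  simp [pow_succ']

lemma Deficient.ne_zero {n : ℕ} (h : Deficient n) : n ≠ 0 := by
  rintro rfl
  simp [Deficient, sigma1] at h

lemma deficient_iff_abundancyIndex_lt_two {n : ℕ} (hn : n ≠ 0) :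
    Deficient n ↔ n.abundancyIndex < 2 := by
  rw [Nat.abundancyIndex, div_lt_iff₀ (Nat.cast_pos.2 (Nat.pos_of_ne_zero hn)), Deficient, sigma1]
  norm_cast

lemma Deficient.of_dvd {d n : ℕ} (h : Deficient n) (hd : d ∣ n) : Deficient d := by
  have hn := h.ne_zero
  rw [deficient_iff_abundancyIndex_lt_two hn] at h
  rw [deficient_iff_abundancyIndex_lt_two (ne_zero_of_dvd_ne_zero hn hd)]
  exact (Nat.abundancyIndex_le_of_dvd hn hd).trans_lt h

lemma Abundant.ne_zero {n : ℕ} (h : Abundant n) : n ≠ 0 := by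
  rintro rfl
  simp [Abundant, sigma1] at h

lemma primitiveAbundant_iff {n : ℕ} :
    PrimitiveAbundant n ↔ Abundant n ∧ ∀ q, q.Prime → q ∣ n → Deficient (n / q) := by
  refine and_congr_right fun hn => ⟨fun h q hq hqn => h _ ?_, fun h d hd => ?_⟩
  · exact Nat.mem_properDivisors.2
      ⟨Nat.div_dvd_of_dvd hqn, Nat.div_lt_self (Nat.pos_of_ne_zero hn.ne_zero) hq.one_lt⟩
  · obtain ⟨hdn, hlt⟩ := Nat.mem_properDivisors.1 hd
    obtain ⟨q, hq, hqd⟩ := Nat.exists_prime_and_dvd (n := n / d) fun h1 =>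
      hlt.ne (Nat.eq_of_dvd_of_div_eq_one hdn h1)
    have hqn : q ∣ n := hqd.trans (Nat.div_dvd_of_dvd hdn)
    refine (h q hq hqn).of_dvd ?_
    rw [Nat.dvd_div_iff_mul_dvd hqn, mul_comm]
    exact Nat.mul_dvd_of_dvd_div hdn hqd

lemma deficient_div_prime_iff {n q α : ℕ} (hq : q.Prime) (hα : 1 ≤ α) (hdvd : q ^ α ∣ n)
    (hndvd : ¬ q ^ (α + 1) ∣ n) :
    Deficient (n / q) ↔ (sigma1 (q ^ α) - 1) * sigma1 n < 2 * n * sigma1 (q ^ α) := by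
  obtain ⟨k, rfl⟩ := Nat.exists_eq_add_of_le' hα
  obtain ⟨r, rfl⟩ := hdvd
  have hqr : (q ^ k).Coprime r ∧ (q ^ (k + 1)).Coprime r := by
    have : q.Coprime r := hq.coprime_iff_not_dvd.2 fun h =>
      hndvd (by rw [pow_succ _ (k + 1)]; exact mul_dvd_mul_left _ h)
    exact ⟨this.pow_left _, this.pow_left _⟩
  have hdiv : q ^ (k + 1) * r / q = q ^ k * r := by
    rw [pow_succ, mul_right_comm, Nat.mul_div_cancel _ hq.pos]
  rw [hdiv, Deficient, sigma1_mul hqr.1, sigma1_mul hqr.2,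
    sigma1_prime_pow_succ_eq_mul_add_one hq, Nat.add_sub_cancel,
    ← Nat.mul_lt_mul_right (a := q * (q * sigma1 (q ^ k) + 1)) (by positivity [hq.pos])]
  constructor <;> intro h <;> convert h using 1 <;> ring

lemma div_lt_div_two_mul_sub_iff {s M T P : ℚ} (hT : 0 < T) (hs : s < 2 * M) :
    P / T < s / (2 * M - s) ↔ 2 * M * P < s * (T + P) := by
  rw [div_lt_div_iff₀ hT (sub_pos.2 hs)]
  constructor <;> intro h <;> linarith

lemma div_two_mul_sub_lt_div_iff {s M T P : ℚ} (hT : 0 < T) (hs : s < 2 * M) :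
    s / (2 * M - s) < P / T ↔ s * (T + P) < 2 * M * P := by
  rw [div_lt_div_iff₀ (sub_pos.2 hs) hT]
  constructor <;> intro h <;> linarith

lemma div_two_mul_sub_add_lt_div_iff {s M T P t : ℚ} (hT : 0 < T) (ht : 1 < t) (hs0 : 0 ≤ s)
    (hs : s < 2 * M) :
    s / (2 * M - s + 2 * M / (t - 1)) < P / T ↔ (t - 1) * s * (T + P) < 2 * M * t * P := by
  have ht1 : 0 < t - 1 := sub_pos.2 ht
  have hden : 0 < 2 * M - s + 2 * M / (t - 1) :=
    add_pos_of_pos_of_nonneg (sub_pos.2 hs) (div_nonneg (by linarith) ht1.le)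
  rw [div_lt_div_iff₀ hden hT, ← mul_lt_mul_iff_of_pos_left ht1]
  have hexpand : (t - 1) * (P * (2 * M - s + 2 * M / (t - 1))) =
      P * ((t - 1) * (2 * M - s) + 2 * M) := by
    field_simp
  rw [hexpand]
  constructor <;> intro h <;> linarith

lemma Deficient.cast_lt {m : ℕ} (h : Deficient m) : (sigma1 m : ℚ) < 2 * m := mod_cast h

lemma abundant_mul_prime_pow_succ_iff {m p k : ℕ} (hdef : Deficient m) (hp : p.Prime)
    (hcop : m.Coprime p) :
    Abundant (m * p ^ (k + 1)) ↔ (p : ℚ) ^ (k + 1) / sigma1 (p ^ k) < center m := by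
  rw [center, div_lt_div_two_mul_sub_iff (by exact_mod_cast sigma1_pos (by positivity [hp.pos]))
    hdef.cast_lt, Abundant, sigma1_mul (hcop.pow_right _), sigma1_prime_pow_succ hp, ← mul_assoc]
  exact_mod_cast Iff.rfl

lemma deficient_mul_prime_pow_iff {m p k : ℕ} (hdef : Deficient m) (hp : p.Prime)
    (hcop : m.Coprime p) :
    Deficient (m * p ^ k) ↔ k = 0 ∨ center m < (p : ℚ) ^ k / sigma1 (p ^ (k - 1)) := by
  cases k with
  | zero => simpa using hdef
  | succ k =>
    rw [center, div_two_mul_sub_lt_div_iff (by exact_mod_cast sigma1_pos (by positivity [hp.pos]))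
      hdef.cast_lt, Deficient, sigma1_mul (hcop.pow_right _), sigma1_prime_pow_succ hp,
      ← mul_assoc]
    simp only [Nat.add_sub_cancel, Nat.add_one_ne_zero, false_or]
    exact_mod_cast Iff.rfl

lemma deficient_mul_prime_pow_succ_div_iff {m p k q α : ℕ} (hdef : Deficient m) (hp : p.Prime)
    (hcop : m.Coprime p) (hq : q.Prime) (hα : 1 ≤ α) (hdvd : q ^ α ∣ m)
    (hndvd : ¬ q ^ (α + 1) ∣ m) :
    Deficient (m * p ^ (k + 1) / q) ↔
      (sigma1 m : ℚ) / ((2 * (m : ℚ) - sigma1 m) + 2 * (m : ℚ) / ((sigma1 (q ^ α) : ℚ) - 1))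
        < (p : ℚ) ^ (k + 1) / sigma1 (p ^ k) := by
  have hqp : (q ^ (α + 1)).Coprime (p ^ (k + 1)) :=
    ((hcop.coprime_dvd_left ((dvd_pow_self q (by omega)).trans hdvd)).pow _ _)
  have hσq : 1 < sigma1 (q ^ α) := by
    obtain ⟨β, rfl⟩ := Nat.exists_eq_add_of_le' hα
    rw [sigma1_prime_pow_succ_eq_mul_add_one hq, Nat.lt_add_left_iff_pos]
    exact Nat.mul_pos hq.pos (sigma1_pos (pow_ne_zero β hq.ne_zero))
  rw [deficient_div_prime_iff hq hα (hdvd.mul_right _) fun h => hndvd (hqp.dvd_of_dvd_mul_right h),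
    div_two_mul_sub_add_lt_div_iff (by exact_mod_cast sigma1_pos (by positivity [hp.pos]))
      (by exact_mod_cast hσq) (by positivity) hdef.cast_lt,
    sigma1_mul (hcop.pow_right _), sigma1_prime_pow_succ hp, ← Nat.cast_lt (α := ℚ)]
  push_cast [Nat.cast_sub hσq.le]
  constructor <;> intro h <;> linarith

theorem stmt7_general (m e p : ℕ) (hdef : Deficient m)
    (he : 1 ≤ e) (hp : p.Prime) (hcop : Nat.Coprime m p) :
    PrimitiveAbundant (m * p ^ e) ↔
      ((p : ℚ) ^ e / (sigma1 (p ^ (e - 1)) : ℚ) < center m ∧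
       (∀ q α : ℕ, q.Prime → 1 ≤ α → q ^ α ∣ m → ¬ q ^ (α + 1) ∣ m →
          (sigma1 m : ℚ) /
              ((2 * (m : ℚ) - (sigma1 m : ℚ)) + 2 * (m : ℚ) / ((sigma1 (q ^ α) : ℚ) - 1))
            < (p : ℚ) ^ e / (sigma1 (p ^ (e - 1)) : ℚ)) ∧
       (e = 1 ∨ center m < (p : ℚ) ^ (e - 1) / (sigma1 (p ^ (e - 2)) : ℚ))) := by
  obtain ⟨k, rfl⟩ := Nat.exists_eq_add_of_le' he
  have hdiv_p : m * p ^ (k + 1) / p = m * p ^ k := by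
    rw [pow_succ, ← mul_assoc, Nat.mul_div_cancel _ hp.pos]
  have hk : k + 1 - 2 = k - 1 := by omega
  simp only [Nat.add_sub_cancel, hk, Nat.add_eq_right]
  rw [primitiveAbundant_iff, abundant_mul_prime_pow_succ_iff hdef hp hcop,
    ← deficient_mul_prime_pow_iff hdef hp hcop, ← hdiv_p]
  refine and_congr_right fun _ => ⟨fun h => ⟨fun q α hq hα hdvd hndvd => ?_, ?_⟩, ?_⟩
  · exact (deficient_mul_prime_pow_succ_div_iff hdef hp hcop hq hα hdvd hndvd).1
      (h q hq (((dvd_pow_self q (by omega)).trans hdvd).mul_right _))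
  · exact h p hp (dvd_mul_of_dvd_right (dvd_pow_self p k.succ_ne_zero) m)
  · rintro ⟨hcond_q, hcond_p⟩ q hq hqn
    rcases hq.dvd_mul.1 hqn with hqm | hqp
    · have hm := hdef.ne_zero
      have hα := hq.factorization_pos_of_dvd hm hqm
      have hndvd := Nat.pow_succ_factorization_not_dvd hm hq
      exact (deficient_mul_prime_pow_succ_div_iff hdef hp hcop hq hα (Nat.ordProj_dvd m q)
        hndvd).2 (hcond_q _ _ hq hα (Nat.ordProj_dvd m q) hndvd)
    · rwa [(Nat.prime_dvd_prime_iff_eq hq hp).1 (hq.dvd_of_dvd_pow hqp)]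

/-- Structure Theorem for PAN: for `m` deficient, `e ≥ 1` and `p` a prime
coprime with `m`, `m·p^e` is primitive abundant iff
(1) `p^e/σ(p^{e-1}) < c(m)`;
(2) `p^e/σ(p^{e-1}) > σ(m)/(d(m) + 2m/(σ(q^α) − 1))` for each `q^α ∣∣ m`; and
(3) `e = 1` or `p^{e-1}/σ(p^{e-2}) > c(m)`. -/
theorem stmt7 (m e p : ℕ) (hm : 1 ≤ m) (hdef : Deficient m)
    (he : 1 ≤ e) (hp : p.Prime) (hcop : Nat.Coprime m p) :
    PrimitiveAbundant (m * p ^ e) ↔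
      ((p : ℚ) ^ e / (sigma1 (p ^ (e - 1)) : ℚ) < center m ∧
       (∀ q α : ℕ, q.Prime → 1 ≤ α → q ^ α ∣ m → ¬ q ^ (α + 1) ∣ m →
          (sigma1 m : ℚ) /
              ((2 * (m : ℚ) - (sigma1 m : ℚ)) + 2 * (m : ℚ) / ((sigma1 (q ^ α) : ℚ) - 1))
            < (p : ℚ) ^ e / (sigma1 (p ^ (e - 1)) : ℚ)) ∧
       (e = 1 ∨ center m < (p : ℚ) ^ (e - 1) / (sigma1 (p ^ (e - 2)) : ℚ))) :=
  stmt7_general m e p hdef he hp hcop
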